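/- Let φ ∈ L¹(ℝ^{2n}) ∩ L²(ℝ^{2n}) and k,l ∈ ℤⁿ. Then for almost every ξ ∈ [0,1/2)ⁿ, ξ' ∈ 𝕋ⁿ, and η ∈ ℝⁿ, Z_{Π_H}(T^t_{(2k,l)}φ)(ξ,ξ',η) = e^{4πi k·ξ} e^{4πi l·ξ'} Z_{Π_H}φ(ξ,ξ',η). -/

import Mathlib

open MeasureTheory Complex Filter
open scoped Real ENNReal

noncomputable section

/-- Integer–real dot product. -/
def idot {n : ℕ} (k : Fin n → ℤ) (x : Fin n → ℝ) : ℝ := ∑ i, (k i : ℝ) * x i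

/-- Integer–integer dot product. -/
def iidot {n : ℕ} (k l : Fin n → ℤ) : ℤ := ∑ i, k i * l i

/-- Cast an integer vector to a real vector. -/
def intCast {n : ℕ} (k : Fin n → ℤ) : Fin n → ℝ := fun i => (k i : ℝ)

/-- The twisted translation `T^t_{(k,l)} φ` on `ℝⁿ × ℝⁿ`:
`T^t_{(k,l)}φ(x,y) = e^{πi(x·l − y·k)} φ(x−k, y−l)`. -/
def twistT {n : ℕ} (k l : Fin n → ℤ) (φ : (Fin n → ℝ) × (Fin n → ℝ) → ℂ) :
    (Fin n → ℝ) × (Fin n → ℝ) → ℂ := fun p =>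
  Complex.exp (Real.pi * Complex.I * (idot l p.1 - idot k p.2)) *
    φ (p.1 - intCast k, p.2 - intCast l)

/-- The kernel of the Weyl transform of `φ`:
`K_φ(ξ,η) = ∫_{ℝⁿ} φ(x, η−ξ) e^{πi x·(ξ+η)} dx`. -/
def weylKernel {n : ℕ} (φ : (Fin n → ℝ) × (Fin n → ℝ) → ℂ) :
    (Fin n → ℝ) × (Fin n → ℝ) → ℂ := fun p =>
  ∫ x : Fin n → ℝ, φ (x, p.2 - p.1) *
    Complex.exp (Real.pi * Complex.I * (∑ i, x i * (p.1 i + p.2 i)))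

/-- The Zak transform of a kernel `K ∈ L²(ℝ^{2n})`:
`Z K(ξ,ξ',η) = Σ_{m∈ℤⁿ} K(m+ξ,η) e^{−2πi m·ξ'}`. -/
def zakK {n : ℕ} (K : (Fin n → ℝ) × (Fin n → ℝ) → ℂ)
    (ξ ξ' η : Fin n → ℝ) : ℂ :=
  ∑' m : Fin n → ℤ, K (intCast m + ξ, η) *
    Complex.exp (-(2 * Real.pi) * Complex.I * idot m ξ')

/-- The Weyl–Zak transform of `φ`. -/
def zakW {n : ℕ} (φ : (Fin n → ℝ) × (Fin n → ℝ) → ℂ)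
    (ξ ξ' η : Fin n → ℝ) : ℂ := zakK (weylKernel φ) ξ ξ' η

/-- The bracket map `[φ,ψ](ξ,ξ') = ∫_{ℝⁿ} Z_Wφ(ξ,ξ',η) conj(Z_Wψ(ξ,ξ',η)) dη`. -/
def bracket {n : ℕ} (φ ψ : (Fin n → ℝ) × (Fin n → ℝ) → ℂ)
    (ξ ξ' : Fin n → ℝ) : ℂ :=
  ∫ η : Fin n → ℝ, zakW φ ξ ξ' η * (starRingEnd ℂ) (zakW ψ ξ ξ' η)

/-- The (real-valued) autocorrelation bracket `[φ,φ](ξ,ξ') = ∫_{ℝⁿ} |Z_Wφ(ξ,ξ',η)|² dη`. -/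
def abracket {n : ℕ} (φ : (Fin n → ℝ) × (Fin n → ℝ) → ℂ)
    (ξ ξ' : Fin n → ℝ) : ℝ :=
  ∫ η : Fin n → ℝ, ‖zakW φ ξ ξ' η‖ ^ 2

/-- The fundamental domain `[0,1)ⁿ` of `𝕋ⁿ`. -/
def box (n : ℕ) : Set (Fin n → ℝ) := Set.univ.pi fun _ => Set.Ico (0 : ℝ) 1

/-- The `L²` inner product (conjugate-linear in the second argument). -/
def L2inner {α : Type*} [MeasurableSpace α] (μ : Measure α) (f g : α → ℂ) : ℂ :=
  ∫ x, f x * (starRingEnd ℂ) (g x) ∂μ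

/-- `f` belongs to the closed linear span in `L²(ℝ^{2n})` of the twisted translates
`{T^t_{(k,l)}φ : k,l ∈ ℤⁿ}`, i.e. to `V^t(φ)`. -/
def inVt {n : ℕ} (φ f : (Fin n → ℝ) × (Fin n → ℝ) → ℂ) : Prop :=
  ∀ ε : ℝ, 0 < ε →
    ∃ (s : Finset ((Fin n → ℤ) × (Fin n → ℤ))) (a : (Fin n → ℤ) × (Fin n → ℤ) → ℂ),
      eLpNorm (fun p => f p - ∑ kl ∈ s, a kl * twistT kl.1 kl.2 φ p) 2 volume
        < ENNReal.ofReal ε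

/-- The Weyl–Zak transform associated with the subgroup `H = 2ℤⁿ×ℤⁿ`:
`Z_{Π_H}f(ξ,ξ',η) = Σ_{m∈ℤⁿ} K_f(ξ + m/2, η) e^{−2πi m·ξ'}`. -/
def zakH {n : ℕ} (φ : (Fin n → ℝ) × (Fin n → ℝ) → ℂ) (ξ ξ' η : Fin n → ℝ) : ℂ :=
  ∑' m : Fin n → ℤ, weylKernel φ (ξ + fun i => (m i : ℝ) / 2, η) *
    Complex.exp (-(2 * Real.pi) * Complex.I * idot m ξ')

/-- The fundamental domain `[0,1/2)ⁿ`. -/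
def boxH (n : ℕ) : Set (Fin n → ℝ) := Set.univ.pi fun _ => Set.Ico (0 : ℝ) (1 / 2)


/-!
Substituting `x ↦ x + k` in the integral defining the Weyl kernel gives
`K_{T^t_{(k,l)}φ}(ξ,η) = e^{πi k·l} e^{2πi k·ξ} K_φ(ξ + l, η)`. For `T^t_{(2k,l)}` the first
phase is `1` and the second, `e^{4πi k·ξ}`, is unchanged by `ξ ↦ ξ + m/2`, so it leaves the series
defining `Z_{Π_H}`; the shift of `ξ` by `l` is absorbed by reindexing `m ↦ m + 2l`, which produces
the factor `e^{4πi l·ξ'}`.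
-/

lemma idot_add {n : ℕ} (k : Fin n → ℤ) (x y : Fin n → ℝ) :
    idot k (x + y) = idot k x + idot k y := by
  simp only [idot, Pi.add_apply, mul_add, Finset.sum_add_distrib]

lemma idot_add_left {n : ℕ} (k m : Fin n → ℤ) (x : Fin n → ℝ) :
    idot (k + m) x = idot k x + idot m x := by
  simp only [idot, Pi.add_apply, Int.cast_add, add_mul, Finset.sum_add_distrib]

lemma idot_two_mul {n : ℕ} (k : Fin n → ℤ) (x : Fin n → ℝ) :
    idot (fun i => 2 * k i) x = 2 * idot k x := by
  simp only [idot, Int.cast_mul, Int.cast_ofNat, Finset.mul_sum, mul_assoc]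

lemma idot_half {n : ℕ} (k m : Fin n → ℤ) :
    idot k (fun i => (m i : ℝ) / 2) = (iidot k m : ℝ) / 2 := by
  simp only [idot, iidot, Int.cast_sum, Int.cast_mul, Finset.sum_div, mul_div_assoc]

lemma iidot_two_mul {n : ℕ} (k l : Fin n → ℤ) :
    iidot (fun i => 2 * k i) l = 2 * iidot k l := by
  simp only [iidot, Finset.mul_sum, mul_assoc]

lemma weylKernel_twistT {n : ℕ} (φ : (Fin n → ℝ) × (Fin n → ℝ) → ℂ)
    (k l : Fin n → ℤ) (ξ η : Fin n → ℝ) :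
    weylKernel (twistT k l φ) (ξ, η) =
      exp (π * I * iidot k l) * exp (2 * π * I * idot k ξ) *
        weylKernel φ (ξ + intCast l, η) := by
  simp only [weylKernel, twistT]
  rw [← integral_add_right_eq_self _ (intCast k), ← integral_const_mul]
  congr 1
  funext u
  have phase : (idot l (u + intCast k) - idot k (η - ξ)) + ∑ i, (u + intCast k) i * (ξ i + η i)
      = iidot k l + 2 * idot k ξ + ∑ i, u i * ((ξ + intCast l) i + η i) := by
    simp only [idot, iidot, intCast, Pi.add_apply, Pi.sub_apply]
    push_cast
    simp only [Finset.mul_sum, ← Finset.sum_sub_distrib, ← Finset.sum_add_distrib]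
    exact Finset.sum_congr rfl fun i _ => by ring
  rw [add_sub_cancel_right, sub_sub, mul_right_comm, ← Complex.exp_add, ← mul_add,
    ← Complex.ofReal_sub, ← Complex.ofReal_add, phase]
  push_cast
  rw [mul_add, mul_add, Complex.exp_add, Complex.exp_add]
  ring_nf

lemma tsum_kernel_add_intCast {n : ℕ} (K : (Fin n → ℝ) × (Fin n → ℝ) → ℂ)
    (l : Fin n → ℤ) (ξ ξ' η : Fin n → ℝ) :
    ∑' m : Fin n → ℤ, K ((ξ + fun i => (m i : ℝ) / 2) + intCast l, η) *
        exp (-(2 * π) * I * idot m ξ')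
      = exp (4 * π * I * idot l ξ') *
          ∑' m : Fin n → ℤ, K (ξ + fun i => (m i : ℝ) / 2, η) *
            exp (-(2 * π) * I * idot m ξ') := by
  symm
  rw [← tsum_mul_left, ← (Equiv.addRight fun i => 2 * l i).tsum_eq]
  refine tsum_congr fun m => ?_
  have hshift : (ξ + fun i => ((m + fun i => 2 * l i) i : ℝ) / 2) =
      (ξ + fun i => (m i : ℝ) / 2) + intCast l := by
    funext i
    simp only [intCast, Pi.add_apply, Int.cast_add, Int.cast_mul, Int.cast_ofNat]
    ring
  have hphase : -(2 * π) * I * (idot m ξ' + 2 * idot l ξ' : ℝ) =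
      -(2 * π) * I * idot m ξ' + -(4 * π * I * idot l ξ') := by
    push_cast
    ring
  rw [Equiv.coe_addRight, hshift, idot_add_left, idot_two_mul, hphase, Complex.exp_add,
    Complex.exp_neg]
  field_simp

lemma zakH_twistT_two_mul_apply {n : ℕ} (φ : (Fin n → ℝ) × (Fin n → ℝ) → ℂ)
    (k l : Fin n → ℤ) (ξ ξ' η : Fin n → ℝ) :
    zakH (twistT (fun i => 2 * k i) l φ) ξ ξ' η =
      exp (4 * π * I * idot k ξ) * exp (4 * π * I * idot l ξ') * zakH φ ξ ξ' η := by
  have hphase : ∀ m : Fin n → ℤ,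
      exp (π * I * iidot (fun i => 2 * k i) l) *
          exp (2 * π * I * idot (fun i => 2 * k i) (ξ + fun i => (m i : ℝ) / 2)) =
        exp (4 * π * I * idot k ξ) := by
    intro m
    rw [iidot_two_mul, idot_two_mul, idot_add, idot_half, ← Complex.exp_add,
      show (π * I * ((2 * iidot k l : ℤ) : ℂ) +
          2 * π * I * ((2 * (idot k ξ + (iidot k m : ℝ) / 2) : ℝ) : ℂ)) =
        4 * π * I * idot k ξ + ((iidot k l + iidot k m : ℤ) : ℂ) * (2 * π * I) by
        push_cast; ring,
      Complex.exp_add, Complex.exp_int_mul_two_pi_mul_I, mul_one]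
  simp only [zakH, weylKernel_twistT, hphase]
  rw [tsum_congr fun m => mul_assoc _ _ _, tsum_mul_left, tsum_kernel_add_intCast]
  exact (mul_assoc _ _ _).symm

theorem zakH_twistT_general {n : ℕ} (φ : (Fin n → ℝ) × (Fin n → ℝ) → ℂ)
    (k l : Fin n → ℤ) :
    ∀ᵐ q : (Fin n → ℝ) × (Fin n → ℝ) × (Fin n → ℝ)
        ∂(volume.restrict (boxH n ×ˢ box n ×ˢ (Set.univ : Set (Fin n → ℝ)))),
      zakH (twistT (fun i => 2 * k i) l φ) q.1 q.2.1 q.2.2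
        = Complex.exp (4 * Real.pi * Complex.I * idot k q.1) *
            Complex.exp (4 * Real.pi * Complex.I * idot l q.2.1) *
            zakH φ q.1 q.2.1 q.2.2 :=
  Eventually.of_forall fun q => zakH_twistT_two_mul_apply φ k l q.1 q.2.1 q.2.2

/-- the Weyl–Zak transform `Z_{Π_H}` of the twisted translate
`T^t_{(2k,l)}φ`. -/
theorem zakH_twistT {n : ℕ} (φ : (Fin n → ℝ) × (Fin n → ℝ) → ℂ)
    (hφ1 : Integrable φ volume) (hφ2 : MemLp φ 2 volume) (k l : Fin n → ℤ) :
    ∀ᵐ q : (Fin n → ℝ) × (Fin n → ℝ) × (Fin n → ℝ)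
        ∂(volume.restrict (boxH n ×ˢ box n ×ˢ (Set.univ : Set (Fin n → ℝ)))),
      zakH (twistT (fun i => 2 * k i) l φ) q.1 q.2.1 q.2.2
        = Complex.exp (4 * Real.pi * Complex.I * idot k q.1) *
            Complex.exp (4 * Real.pi * Complex.I * idot l q.2.1) *
            zakH φ q.1 q.2.1 q.2.2 :=
  zakH_twistT_general φ k l
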